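/- arXiv:0806.0024 — 4 statements merged into one kernel-verified Lean document; each statement's English description precedes it below -/
import Mathlib

section
/- The trilinear, totally antisymmetric bracket on ℂ⁴ determined on the standard basis by [e₁,e₂,e₃] = −e₄, [e₁,e₂,e₄] = e₃, [e₁,e₃,e₄] = −e₂, [e₂,e₃,e₄] = e₁ satisfies the Jacobi identity of the third kind; hence ℂ⁴ with this bracket is a LATKe (denoted L₃). -/
/-!
STATEMENT 1: The trilinear, totally antisymmetric bracket on ℂ⁴ determined on the
standard basis `e₁, e₂, e₃, e₄` (here `E 0, E 1, E 2, E 3`) by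
`[e₁,e₂,e₃] = −e₄`, `[e₁,e₂,e₄] = e₃`, `[e₁,e₃,e₄] = −e₂`, `[e₂,e₃,e₄] = e₁`
satisfies the Jacobi identity of the third kind; hence ℂ⁴ with this bracket
is a LATKe (denoted L₃).
-/

/-- A trilinear bracket on `L`, encoded as iterated linear maps. -/
abbrev TriBracket (k L : Type*) [Field k] [AddCommGroup L] [Module k L] : Type _ :=
  L →ₗ[k] L →ₗ[k] L →ₗ[k] L

variable {k L : Type*} [Field k] [AddCommGroup L] [Module k L]

/-- Total antisymmetry of a trilinear bracket. -/
def IsAlt3 (b : TriBracket k L) : Prop :=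
  (∀ x y z : L, b x y z = - b y x z) ∧ (∀ x y z : L, b x y z = - b x z y)

/-- The Jacobi identity of the third kind. -/
def Jacobi3 (b : TriBracket k L) : Prop :=
  ∀ x y z₁ z₂ z₃ : L,
    b x y (b z₁ z₂ z₃)
      = b (b x y z₁) z₂ z₃ + b z₁ (b x y z₂) z₃ + b z₁ z₂ (b x y z₃)

/-- The `i`-th standard basis vector of `ℂ⁴`. -/
noncomputable def E (i : Fin 4) : Fin 4 → ℂ := Pi.single i 1

/-- The defining values of the bracket of `L₃` on the standard basis:
`[e₁,e₂,e₃] = −e₄`, `[e₁,e₂,e₄] = e₃`, `[e₁,e₃,e₄] = −e₂`, `[e₂,e₃,e₄] = e₁`. -/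
def L3Values (b : TriBracket ℂ (Fin 4 → ℂ)) : Prop :=
  b (E 0) (E 1) (E 2) = - E 3 ∧ b (E 0) (E 1) (E 3) = E 2 ∧
  b (E 0) (E 2) (E 3) = - E 1 ∧ b (E 1) (E 2) (E 3) = E 0

/-!
The bracket is the four-dimensional cross product, `w ⬝ᵥ [x, y, z] = det (w, x, y, z)`.
A totally antisymmetric trilinear bracket is determined by its values on increasing triples
of basis vectors, so every bracket with the values of `L₃` equals the explicit coordinate
bracket `crossProduct4`, for which the Jacobi identity of the third kind is a polynomial
identity in the coordinates.
-/

open Matrix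

theorem eq_zero_of_eq_neg_of_two_ne_zero (h2 : (2 : k) ≠ 0) {v : L} (h : v = -v) : v = 0 := by
  have h2v : (2 : k) • v = 0 := by
    rw [two_smul]
    nth_rewrite 2 [h]
    exact add_neg_cancel v
  exact (smul_eq_zero.mp h2v).resolve_left h2

namespace IsAlt3

variable [NeZero (2 : k)] {b b' : TriBracket k L}

theorem apply_self_left (hb : IsAlt3 b) (x z : L) : b x x z = 0 :=
  eq_zero_of_eq_neg_of_two_ne_zero (NeZero.ne (2 : k)) (hb.1 x x z)

theorem apply_self_right (hb : IsAlt3 b) (x y : L) : b x y y = 0 :=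
  eq_zero_of_eq_neg_of_two_ne_zero (NeZero.ne (2 : k)) (hb.2 x y y)

theorem apply_self_outer (hb : IsAlt3 b) (x y : L) : b x y x = 0 := by
  rw [hb.2, hb.apply_self_left, neg_zero]

theorem ext_basis {ι : Type*} [LinearOrder ι] (e : Module.Basis ι k L) (hb : IsAlt3 b)
    (hb' : IsAlt3 b')
    (h : ∀ i j l, i < j → j < l → b (e i) (e j) (e l) = b' (e i) (e j) (e l)) : b = b' := by
  have swap12 {i j l} (H : b (e j) (e i) (e l) = b' (e j) (e i) (e l)) :
      b (e i) (e j) (e l) = b' (e i) (e j) (e l) := by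
    rw [hb.1, hb'.1, H]
  have swap23 {i j l} (H : b (e i) (e l) (e j) = b' (e i) (e l) (e j)) :
      b (e i) (e j) (e l) = b' (e i) (e j) (e l) := by
    rw [hb.2, hb'.2, H]
  have of_lt {i j} (l) (hij : i < j) : b (e i) (e j) (e l) = b' (e i) (e j) (e l) := by
    rcases lt_trichotomy j l with hjl | rfl | hlj
    · exact h i j l hij hjl
    · rw [hb.apply_self_right, hb'.apply_self_right]
    rcases lt_trichotomy i l with hil | rfl | hli
    · exact swap23 (h i l j hil hlj)
    · rw [hb.apply_self_outer, hb'.apply_self_outer]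
    · exact swap23 (swap12 (h l i j hli hij))
  refine e.ext fun i => e.ext fun j => e.ext fun l => ?_
  rcases lt_trichotomy i j with hij | rfl | hji
  · exact of_lt l hij
  · rw [hb.apply_self_left, hb'.apply_self_left]
  · exact swap12 (of_lt l hji)

end IsAlt3

/-- The Hodge dual of `x ∧ y`: the entry `(m, l)` is `det (eₘ, x, y, eₗ)`. -/
def adMatrix4 : (Fin 4 → k) →ₗ[k] (Fin 4 → k) →ₗ[k] Matrix (Fin 4) (Fin 4) k := by
  refine LinearMap.mk₂ k (fun x y =>
    let p i j := x i * y j - x j * y i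
    !![0, p 2 3, -p 1 3, p 1 2;
      -p 2 3, 0, p 0 3, -p 0 2;
      p 1 3, -p 0 3, 0, p 0 1;
      -p 1 2, p 0 2, -p 0 1, 0]) ?_ ?_ ?_ ?_ <;>
  · intros
    ext i j
    fin_cases i <;> fin_cases j <;>
      simp only [Fin.zero_eta, Fin.mk_one, Fin.reduceFinMk, Fin.isValue, of_apply, cons_val',
        cons_val, cons_val_zero, cons_val_one, cons_val_fin_one, Pi.add_apply, Matrix.add_apply,
        Pi.smul_apply, smul_eq_mul, Matrix.smul_apply] <;>
      ring

def crossProduct4 : (Fin 4 → k) →ₗ[k] (Fin 4 → k) →ₗ[k] (Fin 4 → k) →ₗ[k] Fin 4 → k :=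
  (adMatrix4 (k := k)).compr₂ Matrix.toLin'.toLinearMap

theorem crossProduct4_apply (x y z : Fin 4 → k) :
    crossProduct4 x y z = adMatrix4 x y *ᵥ z := rfl

theorem isAlt3_crossProduct4 : IsAlt3 (crossProduct4 (k := k)) := by
  constructor <;>
  · intro x y z
    ext m
    fin_cases m <;> simp [crossProduct4_apply, adMatrix4, mulVec, dotProduct, Fin.sum_univ_four] <;>
      ring

theorem jacobi3_crossProduct4 : Jacobi3 (crossProduct4 (k := k)) := by
  intro x y z₁ z₂ z₃
  ext m
  fin_cases m <;> simp [crossProduct4_apply, adMatrix4, mulVec, dotProduct, Fin.sum_univ_four] <;>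
    ring

theorem l3Values_crossProduct4 : L3Values crossProduct4 := by
  refine ⟨?_, ?_, ?_, ?_⟩ <;>
  · ext m
    fin_cases m <;> simp [crossProduct4_apply, adMatrix4, mulVec, dotProduct, Fin.sum_univ_four, E]

theorem L3Values.eq_of_isAlt3 {b b' : TriBracket ℂ (Fin 4 → ℂ)} (hval : L3Values b)
    (hval' : L3Values b') (hb : IsAlt3 b) (hb' : IsAlt3 b') : b = b' := by
  refine hb.ext_basis (Pi.basisFun ℂ (Fin 4)) hb' fun i j l hij hjl => ?_
  simp only [Pi.basisFun_apply]
  have increasing : i = 0 ∧ j = 1 ∧ l = 2 ∨ i = 0 ∧ j = 1 ∧ l = 3 ∨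
      i = 0 ∧ j = 2 ∧ l = 3 ∨ i = 1 ∧ j = 2 ∧ l = 3 := by
    revert i j l; decide
  obtain ⟨rfl, rfl, rfl⟩ | ⟨rfl, rfl, rfl⟩ | ⟨rfl, rfl, rfl⟩ | ⟨rfl, rfl, rfl⟩ := increasing
  · exact hval.1.trans hval'.1.symm
  · exact hval.2.1.trans hval'.2.1.symm
  · exact hval.2.2.1.trans hval'.2.2.1.symm
  · exact hval.2.2.2.trans hval'.2.2.2.symm

/-- Any trilinear totally antisymmetric bracket on `ℂ⁴` taking the values of the
`L₃` bracket on the standard basis satisfies the Jacobi identity of the third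
kind; hence `ℂ⁴` with this bracket is a LATKe. -/
theorem L3_jacobi3 (b : TriBracket ℂ (Fin 4 → ℂ))
    (halt : IsAlt3 b) (hval : L3Values b) : Jacobi3 b := by
  rw [hval.eq_of_isAlt3 l3Values_crossProduct4 halt isAlt3_crossProduct4]
  exact jacobi3_crossProduct4
end

section
/- The LATKe L₃ is simple: its bracket is not identically zero, and its only ideals are 0 and all of ℂ⁴. -/
variable {k L : Type*} [Field k] [AddCommGroup L] [Module k L]

/-- An ideal of a LATKe: a subspace `I` with `[L, L, I] ⊆ I`. -/
def IsLATKeIdeal (b : TriBracket k L) (I : Submodule k L) : Prop :=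
  ∀ x y : L, ∀ z ∈ I, b x y z ∈ I

/-- A LATKe is simple if its bracket is not identically zero and its only
ideals are `⊥` and `⊤`. -/
def IsSimpleLATKe (b : TriBracket k L) : Prop :=
  (∃ x y z : L, b x y z ≠ 0) ∧
    ∀ I : Submodule k L, IsLATKeIdeal b I → I = ⊥ ∨ I = ⊤

/-!
For `i < j`, the operator `b (E i) (E j)` kills `E i` and `E j` and rotates the plane spanned by
the two remaining basis vectors. Composing two such operators, for each coordinate `v i` one obtains
`v ↦ ± v i` times a fixed basis vector, so a nonzero ideal contains some basis vector; and single
brackets carry one basis vector to each of the others.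
-/

namespace IsAlt3

variable {b : TriBracket k L}

theorem apply_swap₂₃ (hb : IsAlt3 b) (x y z : L) : b x y z = -b x z y :=
  hb.2 x y z

theorem apply_rotate (hb : IsAlt3 b) (x y z : L) : b x y z = b y z x := by
  rw [hb.1, hb.2, neg_neg]

theorem apply_self₂₃ [IsAddTorsionFree L] (hb : IsAlt3 b) (x y : L) : b x y y = 0 :=
  self_eq_neg.mp (hb.2 x y y)

theorem apply_self₁₃ [IsAddTorsionFree L] (hb : IsAlt3 b) (x y : L) : b x y x = 0 := by
  rw [hb.apply_rotate, hb.apply_self₂₃]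

end IsAlt3

theorem E_apply (i j : Fin 4) : E i j = if j = i then 1 else 0 :=
  Pi.single_apply i 1 j

theorem sum_smul_E (v : Fin 4 → ℂ) : v 0 • E 0 + v 1 • E 1 + v 2 • E 2 + v 3 • E 3 = v := by
  ext i
  fin_cases i <;> simp [E]

theorem LinearMap.apply_eq_sum_smul_E {M : Type*} [AddCommGroup M] [Module ℂ M]
    (f : (Fin 4 → ℂ) →ₗ[ℂ] M) (v : Fin 4 → ℂ) :
    f v = v 0 • f (E 0) + v 1 • f (E 1) + v 2 • f (E 2) + v 3 • f (E 3) := by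
  conv_lhs => rw [← sum_smul_E v]
  simp only [map_add, map_smul]

theorem Submodule.eq_top_of_forall_E_mem {I : Submodule ℂ (Fin 4 → ℂ)} (h : ∀ i, E i ∈ I) :
    I = ⊤ :=
  eq_top_iff.2 fun v _ => sum_smul_E v ▸
    add_mem (add_mem (add_mem (I.smul_mem _ (h 0)) (I.smul_mem _ (h 1)))
      (I.smul_mem _ (h 2))) (I.smul_mem _ (h 3))

namespace L3Values

variable {b : TriBracket ℂ (Fin 4 → ℂ)}

theorem bracket_E0_E1 (hb : IsAlt3 b) (hv : L3Values b) (w : Fin 4 → ℂ) :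
    b (E 0) (E 1) w = w 3 • E 2 - w 2 • E 3 := by
  rw [LinearMap.apply_eq_sum_smul_E, hb.apply_self₁₃, hb.apply_self₂₃, hv.1, hv.2.1]
  module

theorem bracket_E0_E2 (hb : IsAlt3 b) (hv : L3Values b) (w : Fin 4 → ℂ) :
    b (E 0) (E 2) w = w 1 • E 3 - w 3 • E 1 := by
  rw [LinearMap.apply_eq_sum_smul_E, hb.apply_self₁₃, hb.apply_self₂₃, hb.apply_swap₂₃ _ _ (E 1),
    hv.1, hv.2.2.1]
  module

theorem bracket_E0_E3 (hb : IsAlt3 b) (hv : L3Values b) (w : Fin 4 → ℂ) :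
    b (E 0) (E 3) w = w 2 • E 1 - w 1 • E 2 := by
  rw [LinearMap.apply_eq_sum_smul_E, hb.apply_self₁₃, hb.apply_self₂₃, hb.apply_swap₂₃ _ _ (E 1),
    hb.apply_swap₂₃ _ _ (E 2), hv.2.1, hv.2.2.1]
  module

theorem bracket_E1_E2 (hb : IsAlt3 b) (hv : L3Values b) (w : Fin 4 → ℂ) :
    b (E 1) (E 2) w = w 3 • E 0 - w 0 • E 3 := by
  rw [LinearMap.apply_eq_sum_smul_E, hb.apply_self₁₃, hb.apply_self₂₃, ← hb.apply_rotate (E 0),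
    hv.1, hv.2.2.2]
  module

theorem bracket_E2_E3 (hb : IsAlt3 b) (hv : L3Values b) (w : Fin 4 → ℂ) :
    b (E 2) (E 3) w = w 1 • E 0 - w 0 • E 1 := by
  rw [LinearMap.apply_eq_sum_smul_E, hb.apply_self₁₃, hb.apply_self₂₃, ← hb.apply_rotate (E 0),
    ← hb.apply_rotate (E 1), hv.2.2.1, hv.2.2.2]
  module

variable {I : Submodule ℂ (Fin 4 → ℂ)}

theorem eq_top_of_E_mem (hb : IsAlt3 b) (hv : L3Values b) (hI : IsLATKeIdeal b I) {j : Fin 4}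
    (hj : E j ∈ I) : I = ⊤ := by
  have h3 : E 3 ∈ I := by
    fin_cases j
    · simpa [bracket_E1_E2 hb hv, E_apply] using hI (E 1) (E 2) _ hj
    · simpa [bracket_E0_E2 hb hv, E_apply] using hI (E 0) (E 2) _ hj
    · simpa [bracket_E0_E1 hb hv, E_apply] using hI (E 0) (E 1) _ hj
    · exact hj
  refine Submodule.eq_top_of_forall_E_mem fun i => ?_
  fin_cases i
  · simpa [bracket_E1_E2 hb hv, E_apply] using hI (E 1) (E 2) _ h3
  · simpa [bracket_E0_E2 hb hv, E_apply] using hI (E 0) (E 2) _ h3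
  · simpa [bracket_E0_E1 hb hv, E_apply] using hI (E 0) (E 1) _ h3
  · exact h3

theorem exists_E_mem (hb : IsAlt3 b) (hv : L3Values b) (hI : IsLATKeIdeal b I) {v : Fin 4 → ℂ}
    (hvI : v ∈ I) (hv0 : v ≠ 0) : ∃ j, E j ∈ I := by
  obtain ⟨i, hi⟩ : ∃ i, v i ≠ 0 := Function.ne_iff.mp hv0
  have hA : b (E 0) (E 1) v ∈ I := hI _ _ v hvI
  have hB : b (E 2) (E 3) v ∈ I := hI _ _ v hvI
  fin_cases i
  · refine ⟨3, (I.smul_mem_iff (neg_ne_zero.2 hi)).1 ?_⟩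
    simpa [bracket_E0_E2 hb hv, bracket_E2_E3 hb hv, E_apply] using hI (E 0) (E 2) _ hB
  · refine ⟨3, (I.smul_mem_iff (neg_ne_zero.2 hi)).1 ?_⟩
    simpa [bracket_E1_E2 hb hv, bracket_E2_E3 hb hv, E_apply] using hI (E 1) (E 2) _ hB
  · refine ⟨1, (I.smul_mem_iff hi).1 ?_⟩
    simpa [bracket_E0_E2 hb hv, bracket_E0_E1 hb hv, E_apply] using hI (E 0) (E 2) _ hA
  · refine ⟨1, (I.smul_mem_iff hi).1 ?_⟩
    simpa [bracket_E0_E3 hb hv, bracket_E0_E1 hb hv, E_apply] using hI (E 0) (E 3) _ hA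

end L3Values

/-- The LATKe `L₃` — that is, `ℂ⁴` with (the unique) trilinear totally
antisymmetric bracket taking the prescribed values on the standard basis —
is simple: its bracket is not identically zero, and its only ideals are
`⊥` and `⊤`. -/
theorem L3_simple (b : TriBracket ℂ (Fin 4 → ℂ))
    (halt : IsAlt3 b) (hval : L3Values b) : IsSimpleLATKe b := by
  refine ⟨⟨E 0, E 1, E 2, by rw [hval.1]; simp [E]⟩, fun I hI => ?_⟩
  refine or_iff_not_imp_left.2 fun hI0 => ?_
  obtain ⟨v, hvI, hv0⟩ := Submodule.exists_mem_ne_zero_of_ne_bot hI0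
  obtain ⟨j, hj⟩ := L3Values.exists_E_mem halt hval hI hvI hv0
  exact L3Values.eq_top_of_E_mem halt hval hI hj
end

section
/- If L is a simple LATKe, then L is irreducible as a module over Der(L): the only subspaces W ⊆ L satisfying D(W) ⊆ W for every derivation D of L are W = 0 and W = L. -/
variable {k L : Type*} [Field k] [AddCommGroup L] [Module k L]

/-- A derivation of a LATKe: a linear map `D` with
`D [x,y,z] = [Dx,y,z] + [x,Dy,z] + [x,y,Dz]`. -/
def IsDeriv3 (b : TriBracket k L) (D : L →ₗ[k] L) : Prop :=
  ∀ x y z : L, D (b x y z) = b (D x) y z + b x (D y) z + b x y (D z)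

theorem Jacobi3.isDeriv3 {b : TriBracket k L} (hjac : Jacobi3 b) (x y : L) :
    IsDeriv3 b (b x y) :=
  hjac x y

theorem Jacobi3.isLATKeIdeal_of_forall_isDeriv3 {b : TriBracket k L} (hjac : Jacobi3 b)
    {W : Submodule k L} (hW : ∀ D : L →ₗ[k] L, IsDeriv3 b D → ∀ w ∈ W, D w ∈ W) :
    IsLATKeIdeal b W :=
  fun x y => hW (b x y) (hjac.isDeriv3 x y)

theorem simple_irreducible_Der_general (b : TriBracket k L)
    (hjac : Jacobi3 b) (hsimple : IsSimpleLATKe b) :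
    ∀ W : Submodule k L,
      (∀ D : L →ₗ[k] L, IsDeriv3 b D → ∀ w ∈ W, D w ∈ W) → W = ⊥ ∨ W = ⊤ :=
  fun W hW => hsimple.2 W (hjac.isLATKeIdeal_of_forall_isDeriv3 hW)

theorem simple_irreducible_Der (b : TriBracket k L)
    (halt : IsAlt3 b) (hjac : Jacobi3 b) (hsimple : IsSimpleLATKe b) :
    ∀ W : Submodule k L,
      (∀ D : L →ₗ[k] L, IsDeriv3 b D → ∀ w ∈ W, D w ∈ W) → W = ⊥ ∨ W = ⊤ :=
  simple_irreducible_Der_general b hjac hsimple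
end

section
/- For every integer n ≥ 2, the n-linear, totally antisymmetric bracket on ℂ^{n+1} defined in coordinates by [v₁,…,vₙ]_a = Σ ε_{a b₁ … bₙ} (v₁)_{b₁} ⋯ (vₙ)_{bₙ}, where ε is the totally antisymmetric Levi-Civita symbol on n+1 indices, satisfies the Jacobi identity of the n-th kind: [x₁,…,x_{n−1},[z₁,…,zₙ]] = Σ_{i=1}^{n} [z₁,…,[x₁,…,x_{n−1},zᵢ],…,zₙ] for all xⱼ, zᵢ ∈ ℂ^{n+1}. Hence ℂ^{n+1} with this bracket is a Lie algebra of the n-th kind (LAnKe). -/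
/-!
For fixed `x = (x₁, …, x_{n-1})` the map `ad_x = [x, ·]` is linear, and it is skew for the dot
product: `w ⬝ [v] = det (w, v)`, so `w ⬝ ad_x u = det (w, x, u) = -(u ⬝ ad_x w)` by swapping two
rows. In particular `tr ad_x = 0`. Jacobi's formula `∑ₖ det (v₁, …, T vₖ, …) = tr T · det v`,
applied to `T = ad_x` and the rows `(e_a, z₁, …, zₙ)`, gives
`det (ad_x e_a, z) + ∑ᵢ [z₁, …, ad_x zᵢ, …, zₙ]_a = 0`, and skewness identifies the first term with
`-(e_a ⬝ ad_x [z]) = -[x, [z]]_a`.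
-/

namespace AlternatingMap

open Function

variable {R M N ι : Type*} [CommRing R] [AddCommGroup M] [Module R M] [AddCommGroup N] [Module R N]
  [Fintype ι] [DecidableEq ι]

omit [Fintype ι] in
private theorem update_linearMap_id_apply (T : M →ₗ[R] M) (v : ι → M) (k : ι) :
    (fun j => update (fun _ => LinearMap.id) k T j (v j)) = update v k (T (v k)) := by
  ext j
  rcases eq_or_ne j k with rfl | h <;> simp [*]

/-- The derivative at `t = 0` of `t ↦ f ((1 + t • T) ∘ v)`. -/
def derivAction (f : M [⋀^ι]→ₗ[R] N) (T : M →ₗ[R] M) : M [⋀^ι]→ₗ[R] N where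
  toMultilinearMap :=
    ∑ k, f.toMultilinearMap.compLinearMap (update (fun _ => LinearMap.id) k T)
  map_eq_zero_of_eq' v i j hv hij := by
    rw [MultilinearMap.toFun_eq_coe]
    simp only [sum_apply, MultilinearMap.compLinearMap_apply, update_linearMap_id_apply,
      coe_multilinearMap]
    rw [← Finset.sum_subset (Finset.subset_univ {i, j}), Finset.sum_pair hij]
    · have hswap : update v j (T (v j)) = update v i (T (v i)) ∘ Equiv.swap i j := by
        rw [update_comp_equiv, Equiv.symm_swap, Equiv.swap_apply_left, hv,
          Equiv.comp_swap_eq_update, hv, update_eq_self, ← hv, update_eq_self]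
      rw [hswap, f.map_swap _ hij, add_neg_cancel]
    · intro k _ hk
      simp only [Finset.mem_insert, Finset.mem_singleton, not_or] at hk
      exact f.map_eq_zero_of_eq _ (by simp [update_of_ne, Ne.symm hk.1, Ne.symm hk.2, hv]) hij

theorem derivAction_apply (f : M [⋀^ι]→ₗ[R] N) (T : M →ₗ[R] M) (v : ι → M) :
    f.derivAction T v = ∑ k, f (update v k (T (v k))) := by
  simp only [derivAction, coe_mk, sum_apply, MultilinearMap.compLinearMap_apply,
    update_linearMap_id_apply, coe_multilinearMap]

end AlternatingMap

theorem Module.Basis.det_derivAction {R M ι : Type*} [CommRing R] [AddCommGroup M] [Module R M]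
  [Fintype ι] [DecidableEq ι] (b : Module.Basis ι R M) (T : M →ₗ[R] M) :
    b.det.derivAction T = LinearMap.trace R M T • b.det := by
  rw [b.det.derivAction T |>.eq_smul_basis_det b, AlternatingMap.derivAction_apply,
    LinearMap.trace_eq_matrix_trace R b, Matrix.trace]
  congr 1
  refine Finset.sum_congr rfl fun k _ => ?_
  rw [b.det_apply, b.toMatrix_update, b.toMatrix_self, ← Matrix.cramer_apply, Matrix.cramer_one,
    Matrix.diag_apply, LinearMap.toMatrix_apply]
  rfl

open Matrix Function

/-- The `n`-linear totally antisymmetric bracket on `ℂ^{n+1}` (with `n = m+1`)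
given by the Levi-Civita symbol:
`[v₁,…,vₙ]_a = Σ ε_{a b₁ … bₙ} (v₁)_{b₁} ⋯ (vₙ)_{bₙ}`, i.e. the determinant
of the matrix with rows `e_a, v₁, …, vₙ`. -/
noncomputable def lankeBracket (m : ℕ) (v : Fin (m + 1) → (Fin (m + 2) → ℂ)) :
    Fin (m + 2) → ℂ :=
  fun a => Matrix.det (Matrix.of (Fin.cons (Pi.single a 1) v))

section

variable {m : ℕ}

theorem dotProduct_lankeBracket (w : Fin (m + 2) → ℂ) (v : Fin (m + 1) → Fin (m + 2) → ℂ) :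
    w ⬝ᵥ lankeBracket m v = (of (Fin.cons w v)).det := by
  -- both sides are Laplace expansions along the first row, with the same minors
  have expand (u : Fin (m + 2) → ℂ) := det_succ_row_zero (of (Fin.cons u v))
  simp only [of_apply, Fin.cons_zero, submatrix, Fin.cons_succ] at expand
  simp only [dotProduct, lankeBracket, expand, Pi.single_apply, mul_ite, mul_one, mul_zero, ite_mul,
    zero_mul, Finset.sum_ite_eq', Finset.mem_univ, if_true]
  exact Finset.sum_congr rfl fun _ _ => by ring

theorem dotProduct_lankeBracket_snoc (x : Fin m → Fin (m + 2) → ℂ) (u w : Fin (m + 2) → ℂ) :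
    w ⬝ᵥ lankeBracket m (Fin.snoc x u) = -(u ⬝ᵥ lankeBracket m (Fin.snoc x w)) := by
  have hswap : of (Fin.cons u (Fin.snoc x w))
      = (of (Fin.cons w (Fin.snoc x u))).submatrix (Equiv.swap 0 (Fin.last (m + 1))) id := by
    change _ = of (Fin.cons w (Fin.snoc x u) ∘ Equiv.swap 0 (Fin.last (m + 1)))
    rw [Equiv.comp_swap_eq_update, Fin.cons_zero, ← Fin.succ_last,
      Fin.cons_succ, Fin.snoc_last, ← Fin.cons_update, Fin.update_snoc_last, Fin.update_cons_zero]
  rw [dotProduct_lankeBracket, dotProduct_lankeBracket, hswap, det_permute,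
    Equiv.Perm.sign_swap Fin.last_pos.ne]
  simp

/-- `u ↦ [x₁, …, x_{n-1}, u]`, linear because `[x, u]_a = -(u ⬝ᵥ [x, e_a])`. -/
noncomputable def lankeAd (x : Fin m → Fin (m + 2) → ℂ) :
    (Fin (m + 2) → ℂ) →ₗ[ℂ] (Fin (m + 2) → ℂ) :=
  toLin' (-of fun a => lankeBracket m (Fin.snoc x (Pi.single a 1)))

theorem lankeAd_apply (x : Fin m → Fin (m + 2) → ℂ) (u : Fin (m + 2) → ℂ) :
    lankeAd x u = lankeBracket m (Fin.snoc x u) := by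
  ext a
  rw [lankeAd, toLin'_apply, neg_mulVec, Pi.neg_apply]
  change -(lankeBracket m (Fin.snoc x (Pi.single a 1)) ⬝ᵥ u) = _
  rw [dotProduct_comm, ← dotProduct_lankeBracket_snoc, single_one_dotProduct]

theorem trace_lankeAd (x : Fin m → Fin (m + 2) → ℂ) : LinearMap.trace ℂ _ (lankeAd x) = 0 := by
  rw [lankeAd, trace_toLin'_eq, trace_neg, neg_eq_zero]
  refine Finset.sum_eq_zero fun a _ => det_zero_of_row_eq Fin.last_pos.ne ?_
  funext j
  rw [of_apply, of_apply, Fin.cons_zero, ← Fin.succ_last, Fin.cons_succ, Fin.snoc_last]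

end

theorem lanke_jacobi_general (m : ℕ)
    (x : Fin m → (Fin (m + 2) → ℂ)) (z : Fin (m + 1) → (Fin (m + 2) → ℂ)) :
    lankeBracket m (Fin.snoc x (lankeBracket m z))
      = ∑ i : Fin (m + 1),
          lankeBracket m
            (Function.update z i (lankeBracket m (Fin.snoc x (z i)))) := by
  funext a
  have hvanish : (Pi.basisFun ℂ _).det.derivAction (lankeAd x) (Fin.cons (Pi.single a 1) z) = 0 := by
    rw [Module.Basis.det_derivAction, trace_lankeAd, zero_smul, AlternatingMap.zero_apply]
  rw [AlternatingMap.derivAction_apply, Fin.sum_univ_succ] at hvanish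
  simp only [Fin.cons_zero, Fin.update_cons_zero, Fin.cons_succ, ← Fin.cons_update, lankeAd_apply,
    Pi.basisFun_det_apply] at hvanish
  have hlhs : lankeBracket m (Fin.snoc x (lankeBracket m z)) a
      = -(of (Fin.cons (lankeBracket m (Fin.snoc x (Pi.single a 1))) z)).det := by
    rw [← dotProduct_lankeBracket, dotProduct_comm, ← dotProduct_lankeBracket_snoc,
      single_one_dotProduct]
  rw [hlhs, Finset.sum_apply]
  exact neg_eq_of_add_eq_zero_right hvanish

/-- The Levi-Civita bracket on `ℂ^{n+1}` satisfies the Jacobi identity of the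
n-th kind (`n = m + 1 ≥ 2`):
`[x₁,…,x_{n−1},[z₁,…,zₙ]] = Σ_{i=1}^{n} [z₁,…,[x₁,…,x_{n−1},zᵢ],…,zₙ]`. -/
theorem lanke_jacobi (m : ℕ) (hm : 1 ≤ m)
    (x : Fin m → (Fin (m + 2) → ℂ)) (z : Fin (m + 1) → (Fin (m + 2) → ℂ)) :
    lankeBracket m (Fin.snoc x (lankeBracket m z))
      = ∑ i : Fin (m + 1),
          lankeBracket m
            (Function.update z i (lankeBracket m (Fin.snoc x (z i)))) :=
  lanke_jacobi_general m x z
end
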